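/- arXiv:2208.10237 — 3 statements merged into one kernel-verified Lean document; each statement's English description precedes it below -/
import Mathlib

section
/- The planar system ẋ = ν_x − K(a(1+r) sin x + sin y), ẏ = ν_y − K(a sin x + (1+s) sin y) with K > 0, a > 0, r > 0, s > 0 has a fixed point if and only if K ≥ K₄, where K₄ = max(K₄⁽¹⁾, K₄⁽²⁾), K₄⁽¹⁾ = ((1+s)ν_x − ν_y)/(a(r + s + rs)), and K₄⁽²⁾ = |ν_x − (1+r)ν_y|/(r + s + rs), under the assumption ν_x > 0 and (1+s)ν_x − ν_y ≥ 0. -/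
open Real

/-- Existence of a fixed point of the planar system iff K ≥ K₄ =
max(K₄⁽¹⁾, K₄⁽²⁾). -/
theorem fixed_point_exists_iff_K_ge_K4
    (νx νy K a r s : ℝ)
    (hνx : 0 < νx) (hnum : 0 ≤ (1 + s) * νx - νy)
    (hK : 0 < K) (ha : 0 < a) (hr : 0 < r) (hs : 0 < s) :
    (∃ x y : ℝ, νx = K * (a * (1 + r) * sin x + sin y) ∧
                νy = K * (a * sin x + (1 + s) * sin y)) ↔
    K ≥ max (((1 + s) * νx - νy) / (a * (r + s + r * s)))
            (|νx - (1 + r) * νy| / (r + s + r * s)) := by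
  have hD : (0:ℝ) < r + s + r * s := by positivity
  constructor
  · rintro ⟨x, y, h1, h2⟩
    have e1 : (1 + s) * νx - νy = K * a * (r + s + r * s) * sin x := by
      rw [h1, h2]; ring
    have e2 : (1 + r) * νy - νx = K * (r + s + r * s) * sin y := by
      rw [h1, h2]; ring
    rw [ge_iff_le, max_le_iff]
    constructor
    · rw [div_le_iff₀ (by positivity)]
      calc (1 + s) * νx - νy = K * a * (r + s + r * s) * sin x := e1
        _ ≤ K * a * (r + s + r * s) * 1 := by
            gcongr; exact sin_le_one x
        _ = K * (a * (r + s + r * s)) := by ring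
    · rw [div_le_iff₀ hD]
      have : |νx - (1 + r) * νy| = K * (r + s + r * s) * |sin y| := by
        rw [← abs_neg, neg_sub, e2, abs_mul, abs_of_pos (by positivity)]
      rw [this]
      calc K * (r + s + r * s) * |sin y| ≤ K * (r + s + r * s) * 1 := by
            gcongr; exact abs_sin_le_one y
        _ = K * (r + s + r * s) := by ring
  · intro hKge
    rw [ge_iff_le, max_le_iff] at hKge
    obtain ⟨hK1, hK2⟩ := hKge
    set u : ℝ := ((1 + s) * νx - νy) / (K * a * (r + s + r * s)) with hu
    set v : ℝ := ((1 + r) * νy - νx) / (K * (r + s + r * s)) with hv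
    have hu0 : 0 ≤ u := by positivity
    have hu1 : u ≤ 1 := by
      rw [hu, div_le_one (by positivity)]
      rw [div_le_iff₀ (by positivity)] at hK1
      linarith
    have hv1 : |v| ≤ 1 := by
      rw [div_le_iff₀ hD] at hK2
      rw [hv, abs_div, div_le_one (abs_pos.mpr (by positivity)),
        abs_of_pos (show (0:ℝ) < K * (r + s + r * s) by positivity)]
      calc |(1 + r) * νy - νx| = |νx - (1 + r) * νy| := abs_sub_comm _ _
        _ ≤ K * (r + s + r * s) := hK2
    have hv1' := abs_le.mp hv1
    refine ⟨arcsin u, arcsin v, ?_, ?_⟩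
    all_goals
      rw [sin_arcsin (by linarith) hu1, sin_arcsin hv1'.1 hv1'.2, hu, hv]
      field_simp
      ring
end

section
/- Let ν_x > 0, K > 0, a > 0, r > 0 with K ≥ ν_x/(a(1+r) − 1) and a(1+r) > 1. If (x(t), y(t)) is a solution of ẋ = ν_x − K(a(1+r) sin x + sin y), ẏ = ν_y − K(a sin x + (1+s) sin y) with x(0) ∈ [−π/2, π/2], then x(t) ∈ [−π/2, π/2] for all t ≥ 0 (the strip D = [−π/2, π/2] × ℝ is forward invariant). -/
open Real

/-- Auxiliary Riccati-type comparison: if `u 0 ≤ 0` and `u' ≤ C * u ^ 2`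
everywhere, then `u` stays nonpositive for `t ≥ 0`. -/
lemma aux_nonpos {u u' : ℝ → ℝ} {C t1 : ℝ} (hC : 0 ≤ C)
    (hu : ∀ t, HasDerivAt u (u' t) t)
    (hb : ∀ t, u' t ≤ C * (u t) ^ 2)
    (h0 : u 0 ≤ 0) (ht1 : 0 ≤ t1) : u t1 ≤ 0 := by
  by_contra h
  push_neg at h
  have hcont : Continuous u := by
    rw [continuous_iff_continuousAt]; exact fun t => (hu t).continuousAt
  set S : Set ℝ := Set.Icc 0 t1 ∩ {t | u t ≤ 0} with hSdef
  have h0S : (0 : ℝ) ∈ S := ⟨⟨le_refl 0, ht1⟩, h0⟩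
  have hbdd : BddAbove S := ⟨t1, fun t ht => ht.1.2⟩
  set T := sSup S with hTdef
  have hclosed : IsClosed S :=
    isClosed_Icc.inter (isClosed_le hcont continuous_const)
  have hTS : T ∈ S := hclosed.csSup_mem ⟨0, h0S⟩ hbdd
  have hT0 : (0 : ℝ) ≤ T := le_csSup hbdd h0S
  have hTt1 : T ≤ t1 := hTS.1.2
  have hTlt : T < t1 := by
    rcases lt_or_eq_of_le hTt1 with h' | h'
    · exact h'
    · exact absurd (h' ▸ hTS.2) (not_le.2 h)
  have hpos : ∀ t ∈ Set.Ioc T t1, 0 < u t := by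
    intro t ht
    by_contra hle
    push_neg at hle
    have : t ∈ S := ⟨⟨hT0.trans ht.1.le, ht.2⟩, hle⟩
    exact absurd (le_csSup hbdd this) (not_le.2 ht.1)
  have hTz : u T = 0 := by
    refine le_antisymm hTS.2 ?_
    have htd : Filter.Tendsto u (nhdsWithin T (Set.Ioi T)) (nhds (u T)) :=
      (hcont.continuousAt.tendsto).mono_left nhdsWithin_le_nhds
    refine ge_of_tendsto htd ?_
    filter_upwards [Ioo_mem_nhdsGT_of_mem ⟨le_refl T, hTlt⟩] with t ht
    exact (hpos t ⟨ht.1, ht.2.le⟩).le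
  have hnn : ∀ t ∈ Set.Icc T t1, 0 ≤ u t := by
    intro t ht
    rcases eq_or_lt_of_le ht.1 with rfl | h'
    · exact hTz.ge
    · exact (hpos t ⟨h', ht.2⟩).le
  obtain ⟨m, hm, hmax⟩ :=
    isCompact_Icc.exists_isMaxOn (Set.nonempty_Icc.2 hTt1)
      (hcont.continuousOn (s := Set.Icc T t1))
  set M := u m with hMdef
  have hM0 : 0 ≤ M := hnn m hm
  have hboundK : ∀ t ∈ Set.Ico T t1, u' t ≤ C * M * u t + 0 := by
    intro t ht
    have h1 : u t ≤ M := hmax ⟨ht.1, ht.2.le⟩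
    have h2 : 0 ≤ u t := hnn t ⟨ht.1, ht.2.le⟩
    have : (u t) ^ 2 ≤ M * u t := by nlinarith
    calc u' t ≤ C * (u t) ^ 2 := hb t
      _ ≤ C * (M * u t) := by
          exact mul_le_mul_of_nonneg_left this hC
      _ = C * M * u t + 0 := by ring
  have := le_gronwallBound_of_liminf_deriv_right_le (f := u) (f' := u')
      (δ := 0) (K := C * M) (ε := 0) (a := T) (b := t1)
      (hcont.continuousOn)
      (fun t _ r hr => ((hu t).hasDerivWithinAt).liminf_right_slope_le hr)
      hTz.le hboundK t1 ⟨hTt1, le_refl t1⟩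
  rw [gronwallBound_ε0_δ0] at this
  exact absurd this (not_le.2 h)

/-- For K ≥ ν_x/(a(1+r)−1), the strip [−π/2, π/2] × ℝ is forward
invariant for the planar system. -/
theorem strip_forward_invariant
    (νx νy K a r s : ℝ)
    (hνx : 0 < νx) (hK : 0 < K) (ha : 0 < a) (hr : 0 < r)
    (har : 1 < a * (1 + r))
    (hKge : K ≥ νx / (a * (1 + r) - 1))
    (x y : ℝ → ℝ)
    (hx : ∀ t, HasDerivAt x (νx - K * (a * (1 + r) * sin (x t) + sin (y t))) t)
    (hy : ∀ t, HasDerivAt y (νy - K * (a * sin (x t) + (1 + s) * sin (y t))) t)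
    (hx0 : x 0 ∈ Set.Icc (-(π / 2)) (π / 2)) :
    ∀ t : ℝ, 0 ≤ t → x t ∈ Set.Icc (-(π / 2)) (π / 2) := by
  have hA : (0 : ℝ) < a * (1 + r) := lt_trans one_pos har
  have hKν : νx ≤ K * (a * (1 + r) - 1) := by
    have hd : (0 : ℝ) < a * (1 + r) - 1 := by linarith
    calc νx = νx / (a * (1 + r) - 1) * (a * (1 + r) - 1) := by
          field_simp
      _ ≤ K * (a * (1 + r) - 1) := by
          exact mul_le_mul_of_nonneg_right hKge hd.le
  set C := K * (a * (1 + r)) / 2 with hCdef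
  have hC : 0 ≤ C := by positivity
  intro t0 ht0
  constructor
  · -- lower bound: apply aux to u t = -x t - π/2
    have key : (-x t0 - π / 2) ≤ 0 := by
      refine aux_nonpos (u := fun t => -x t - π / 2)
        (u' := fun t => -(νx - K * (a * (1 + r) * sin (x t) + sin (y t))))
        hC (fun t => ((hx t).neg).sub_const _) ?_ (by linarith [hx0.1]) ht0
      intro t
      have h1 : 1 - (x t + π / 2) ^ 2 / 2 ≤ cos (x t + π / 2) :=
        Real.one_sub_sq_div_two_le_cos
      rw [Real.cos_add_pi_div_two] at h1
      have h2 : sin (y t) ≤ 1 := Real.sin_le_one _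
      have h3 : (-x t - π / 2) ^ 2 = (x t + π / 2) ^ 2 := by ring
      simp only [h3, hCdef]
      nlinarith [mul_le_mul_of_nonneg_left h1 (mul_pos hK hA).le,
        mul_le_mul_of_nonneg_left h2 hK.le]
    linarith
  · -- upper bound: apply aux to u t = x t - π/2
    have key : (x t0 - π / 2) ≤ 0 := by
      refine aux_nonpos (u := fun t => x t - π / 2)
        (u' := fun t => νx - K * (a * (1 + r) * sin (x t) + sin (y t)))
        hC (fun t => (hx t).sub_const _) ?_ (by linarith [hx0.2]) ht0
      intro t
      have h1 : 1 - (x t - π / 2) ^ 2 / 2 ≤ cos (x t - π / 2) :=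
        Real.one_sub_sq_div_two_le_cos
      rw [Real.cos_sub_pi_div_two] at h1
      have h2 : -1 ≤ sin (y t) := Real.neg_one_le_sin _
      simp only [hCdef]
      nlinarith [mul_le_mul_of_nonneg_left h1 (mul_pos hK hA).le,
        mul_le_mul_of_nonneg_left h2 hK.le]
    linarith
end

section
/- Suppose ν_x > 0, a > 0, r > 0 with a(1+r) > 1, and K ≥ ν_x/(a(1+r) − 1). Let x₁ = arcsin((ν_x/K − 1)/(a(1+r))) and x₂ = arcsin((ν_x/K + 1)/(a(1+r))). Then −π/2 ≤ x₁ ≤ x₂ ≤ π/2, and for all y: ẋ ≥ 0 whenever x = x₁ and ẋ ≤ 0 whenever x = x₂, so the narrower strip [x₁, x₂] × ℝ is also forward invariant. -/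
open Real

/-- Auxiliary invariance lemma: if `f 0 ≤ 0` and `f' t ≤ C * f t` whenever `f t ≥ 0`,
then `f t ≤ 0` for all `t ≥ 0`. -/
lemma aux_nonpos_invariant (C : ℝ) (f f' : ℝ → ℝ)
    (hf : ∀ t, HasDerivAt f (f' t) t)
    (hbound : ∀ t, 0 ≤ f t → f' t ≤ C * f t)
    (h0 : f 0 ≤ 0) : ∀ t, 0 ≤ t → f t ≤ 0 := by
  intro t ht
  by_contra hpos
  push_neg at hpos
  have hcont : Continuous f := by
    have : Differentiable ℝ f := fun t => (hf t).differentiableAt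
    exact this.continuous
  set S : Set ℝ := {s | s ∈ Set.Icc 0 t ∧ f s ≤ 0} with hS
  have hSclosed : IsClosed S := by
    have : S = Set.Icc 0 t ∩ f ⁻¹' Set.Iic 0 := by
      ext s; simp [hS, Set.mem_Icc, and_assoc]
    rw [this]
    exact isClosed_Icc.inter (isClosed_Iic.preimage hcont)
  have hS0 : (0 : ℝ) ∈ S := ⟨⟨le_refl 0, ht⟩, h0⟩
  have hSne : S.Nonempty := ⟨0, hS0⟩
  have hSbdd : BddAbove S := ⟨t, fun s hs => hs.1.2⟩
  set t₀ := sSup S with ht₀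
  have ht₀S : t₀ ∈ S := hSclosed.csSup_mem hSne hSbdd
  have ht₀t : t₀ ≤ t := ht₀S.1.2
  have ht₀lt : t₀ < t := lt_of_le_of_ne ht₀t (by
    intro heq
    exact absurd (heq ▸ ht₀S.2) (not_le.mpr hpos))
  have hmid : ∀ s, t₀ < s → s ≤ t → 0 < f s := by
    intro s hs1 hs2
    by_contra h
    push_neg at h
    have : s ∈ S := ⟨⟨le_trans ht₀S.1.1 hs1.le, hs2⟩, h⟩
    exact absurd (le_csSup hSbdd this) (not_le.mpr hs1)
  -- f t₀ = 0
  have hf0 : f t₀ = 0 := by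
    have hge : 0 ≤ f t₀ := by
      have htend : Filter.Tendsto f (nhdsWithin t₀ (Set.Ioi t₀)) (nhds (f t₀)) :=
        (hcont.tendsto t₀).mono_left nhdsWithin_le_nhds
      refine ge_of_tendsto htend ?_
      filter_upwards [Ioc_mem_nhdsGT_of_mem (Set.left_mem_Ico.mpr ht₀lt)] with s hs
      exact (hmid s hs.1 hs.2).le
    exact le_antisymm ht₀S.2 hge
  -- nonneg on [t₀, t]
  have hnn : ∀ s ∈ Set.Icc t₀ t, 0 ≤ f s := by
    intro s hs
    rcases eq_or_lt_of_le hs.1 with rfl | h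
    · exact hf0.ge
    · exact (hmid s h hs.2).le
  -- Gronwall
  have := le_gronwallBound_of_liminf_deriv_right_le
    (f := f) (f' := f') (δ := 0) (K := C) (ε := 0) (a := t₀) (b := t)
    (hcont.continuousOn)
    (fun s _ r hr => ((hf s).hasDerivWithinAt.liminf_right_slope_le hr))
    (le_of_eq hf0)
    (fun s hs => by
      have := hbound s (hnn s ⟨hs.1, hs.2.le⟩)
      linarith)
    t ⟨ht₀t, le_refl t⟩
  rw [gronwallBound_ε0_δ0] at this
  linarith

set_option maxHeartbeats 1000000 in
/-- With x₁ = arcsin((ν_x/K − 1)/(a(1+r))) and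
x₂ = arcsin((ν_x/K + 1)/(a(1+r))), we have −π/2 ≤ x₁ ≤ x₂ ≤ π/2, the flow points
inward on x = x₁ and x = x₂ for every y, and the narrower strip [x₁, x₂] × ℝ is
forward invariant. -/
theorem narrow_strip_forward_invariant
    (νx K a r : ℝ)
    (hνx : 0 < νx) (hK : 0 < K) (ha : 0 < a) (hr : 0 < r)
    (har : 1 < a * (1 + r))
    (hKge : K ≥ νx / (a * (1 + r) - 1))
    (x₁ x₂ : ℝ)
    (hx₁ : x₁ = arcsin ((νx / K - 1) / (a * (1 + r))))
    (hx₂ : x₂ = arcsin ((νx / K + 1) / (a * (1 + r)))) :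
    (-(π / 2) ≤ x₁ ∧ x₁ ≤ x₂ ∧ x₂ ≤ π / 2) ∧
    (∀ y : ℝ,
      0 ≤ νx - K * (a * (1 + r) * sin x₁ + sin y) ∧
      νx - K * (a * (1 + r) * sin x₂ + sin y) ≤ 0) ∧
    (∀ x y : ℝ → ℝ,
      (∀ t, HasDerivAt x (νx - K * (a * (1 + r) * sin (x t) + sin (y t))) t) →
      x 0 ∈ Set.Icc x₁ x₂ → ∀ t : ℝ, 0 ≤ t → x t ∈ Set.Icc x₁ x₂) := by
  set A := a * (1 + r) with hA
  have hA1 : 1 < A := har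
  have hA0 : 0 < A := lt_trans one_pos hA1
  -- νx ≤ K * (A - 1)
  have hνK : νx ≤ K * (A - 1) := by
    have h1 : 0 < A - 1 := by linarith
    have h2 : νx / (A - 1) ≤ K := hKge
    calc νx = νx / (A - 1) * (A - 1) := by field_simp
      _ ≤ K * (A - 1) := by nlinarith
  have hub : (νx / K + 1) / A ≤ 1 := by
    rw [div_le_one hA0]
    have : νx / K ≤ A - 1 := (div_le_iff₀ hK).mpr (by linarith [mul_comm K (A-1)])
    linarith
  have hlb : -1 ≤ (νx / K - 1) / A := by
    rw [le_div_iff₀ hA0]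
    have : 0 < νx / K := div_pos hνx hK
    nlinarith
  have hlb2 : -1 ≤ (νx / K + 1) / A := by
    have : 0 < νx / K := div_pos hνx hK
    have h1 : 0 ≤ (νx / K + 1) / A := div_nonneg (by linarith) hA0.le
    linarith
  have hub1 : (νx / K - 1) / A ≤ 1 :=
    le_trans ((div_le_div_iff_of_pos_right hA0).mpr (by linarith)) hub
  have hsin1 : sin x₁ = (νx / K - 1) / A := by
    rw [hx₁]; exact sin_arcsin hlb hub1
  have hsin2 : sin x₂ = (νx / K + 1) / A := by
    rw [hx₂]; exact sin_arcsin hlb2 hub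
  have hKν : K * (νx / K) = νx := by field_simp
  have hflow1 : ∀ y : ℝ, 0 ≤ νx - K * (A * sin x₁ + sin y) := by
    intro y
    have h1 : A * sin x₁ = νx / K - 1 := by
      rw [hsin1]; field_simp
    rw [h1]
    have : sin y ≤ 1 := sin_le_one y
    have : K * (νx / K - 1 + sin y) = νx - K + K * sin y := by
      rw [mul_add, mul_sub, hKν]; ring
    nlinarith [sin_le_one y]
  have hflow2 : ∀ y : ℝ, νx - K * (A * sin x₂ + sin y) ≤ 0 := by
    intro y
    have h1 : A * sin x₂ = νx / K + 1 := by
      rw [hsin2]; field_simp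
    rw [h1]
    nlinarith [neg_one_le_sin y]
  have hlip : ∀ u v : ℝ, |sin u - sin v| ≤ |u - v| := by
    intro u v
    rw [Real.sin_sub_sin]
    have h1 : |sin ((u - v) / 2)| ≤ |(u - v) / 2| := abs_sin_le_abs
    have h2 : |cos ((u + v) / 2)| ≤ 1 := abs_cos_le_one _
    calc |2 * sin ((u - v) / 2) * cos ((u + v) / 2)|
        = 2 * |sin ((u - v) / 2)| * |cos ((u + v) / 2)| := by
          rw [abs_mul, abs_mul]; norm_num
      _ ≤ 2 * |(u - v) / 2| * 1 := by
          apply mul_le_mul (by nlinarith [abs_nonneg (sin ((u - v) / 2))]) h2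
            (abs_nonneg _) (by positivity)
      _ = |u - v| := by rw [abs_div, abs_two]; ring
  refine ⟨⟨?_, ?_, ?_⟩, fun y => ⟨hflow1 y, hflow2 y⟩, ?_⟩
  · rw [hx₁]; exact neg_pi_div_two_le_arcsin _
  · rw [hx₁, hx₂]
    exact monotone_arcsin ((div_le_div_iff_of_pos_right hA0).mpr (by linarith))
  · rw [hx₂]; exact arcsin_le_pi_div_two _
  · intro x y hderiv h0 t ht
    have hC : (0 : ℝ) ≤ K * A := le_of_lt (mul_pos hK hA0)
    constructor
    · -- lower bound: g s = x₁ - x s ≤ 0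
      have := aux_nonpos_invariant (K * A) (fun s => x₁ - x s)
        (fun s => -(νx - K * (A * sin (x s) + sin (y s))))
        (fun s => ((hderiv s).const_sub x₁))
        (fun s hs => by
          -- x s ≤ x₁, show -(ẋ) ≤ K*A*(x₁ - x s)
          have hxs : x s ≤ x₁ := by simpa using hs
          have h1 := hflow1 (y s)
          have h2 : |sin x₁ - sin (x s)| ≤ |x₁ - x s| := hlip _ _
          have h3 : |x₁ - x s| = x₁ - x s := abs_of_nonneg (by linarith)
          rw [h3] at h2
          have h4 : sin (x s) - sin x₁ ≤ x₁ - x s := by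
            have := (abs_le.mp h2).1; linarith
          show -(νx - K * (A * sin (x s) + sin (y s))) ≤ K * A * (x₁ - x s)
          nlinarith [mul_le_mul_of_nonneg_left h4 hC])
        (by simpa using h0.1)
        t ht
      simpa using this
    · -- upper bound: g s = x s - x₂ ≤ 0
      have := aux_nonpos_invariant (K * A) (fun s => x s - x₂)
        (fun s => νx - K * (A * sin (x s) + sin (y s)))
        (fun s => ((hderiv s).sub_const x₂))
        (fun s hs => by
          have hxs : x₂ ≤ x s := by simpa using hs
          have h1 := hflow2 (y s)
          have h2 : |sin (x s) - sin x₂| ≤ |x s - x₂| := hlip _ _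
          have h3 : |x s - x₂| = x s - x₂ := abs_of_nonneg (by linarith)
          rw [h3] at h2
          have h4 : sin x₂ - sin (x s) ≤ x s - x₂ := by
            have := (abs_le.mp h2).1
            linarith
          show νx - K * (A * sin (x s) + sin (y s)) ≤ K * A * (x s - x₂)
          nlinarith [mul_le_mul_of_nonneg_left h4 hC])
        (by simpa using h0.2)
        t ht
      simpa using this
end
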